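/- arXiv:1608.07728 — 2 statements merged into one kernel-verified Lean document; each statement's English description precedes it below -/
import Mathlib

section
/- Let ρ_{AE} = (1/N)(|0⟩⟨0|_A ⊗ |g⁰⟩⟨g⁰| + |1⟩⟨1|_A ⊗ |g¹⟩⟨g¹|) be a density operator with N⁰ = ⟨g⁰|g⁰⟩ > 0, N¹ = ⟨g¹|g¹⟩ > 0, N = N⁰+N¹. Then the conditional von Neumann entropy satisfies S(A|E)_ρ ≥ h(N⁰/(N⁰+N¹)) − h(λ), where λ = 1/2 + √((N⁰−N¹)² + 4(Re⟨g⁰|g¹⟩)²)/(2(N⁰+N¹)). -/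
open scoped ComplexInnerProductSpace

/-- Von Neumann entropy (base-2) of a Hermitian matrix, via its eigenvalues. -/
noncomputable def vonNeumannEntropy {n : Type*} [Fintype n] [DecidableEq n]
    {ρ : Matrix n n ℂ} (hρ : ρ.IsHermitian) : ℝ :=
  -∑ i, hρ.eigenvalues i * Real.logb 2 (hρ.eigenvalues i)

/-- Binary Shannon entropy (base 2). -/
noncomputable def binEnt (x : ℝ) : ℝ :=
  -(x * Real.logb 2 x) - (1 - x) * Real.logb 2 (1 - x)
/-!
Both `ρ_AE` and `ρ_E` have the form `A = N⁻¹ (|x⟩⟨x| + |y⟩⟨y|)` with `N = ‖x‖² + ‖y‖²`. By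
Cayley–Hamilton for the Gram matrix of `x, y`, such an `A` satisfies `A³ = A² - μ(1-μ) A`, where
`μ` is the larger eigenvalue of the normalized Gram matrix; together with `tr A = 1` and
`tr A² = μ² + (1-μ)²` this forces the spectrum `{μ, 1-μ, 0, …, 0}`, so `S(A) = h(μ)`.
For `ρ_AE` the vectors `|0⟩ ⊗ g⁰` and `|1⟩ ⊗ g¹` are orthogonal and `S(AE) = h(N⁰/N)`; for `ρ_E`
the eigenvalue `μ` involves `|⟪g⁰, g¹⟫| ≥ |Re ⟪g⁰, g¹⟫|`, and `h` is decreasing on `[1/2, 1]`.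
-/

open Matrix

lemma binEnt_eq_binEntropy_div_log_two (x : ℝ) : binEnt x = Real.binEntropy x / Real.log 2 := by
  simp only [binEnt, Real.binEntropy, Real.logb, Real.log_inv]
  ring

lemma binEnt_one_sub (x : ℝ) : binEnt (1 - x) = binEnt x := by
  simp only [binEnt_eq_binEntropy_div_log_two, Real.binEntropy_one_sub]

lemma binEnt_antitoneOn : AntitoneOn binEnt (Set.Icc (1 / 2) 1) := by
  intro x hx y hy hxy
  simp only [binEnt_eq_binEntropy_div_log_two, one_div] at *
  exact div_le_div_of_nonneg_right (Real.binEntropy_strictAntiOn.antitoneOn hx hy hxy)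
    (Real.log_nonneg one_le_two)

/-- The larger eigenvalue of the density matrix `(a + b)⁻¹ • !![a, c; c, b]`. -/
noncomputable def gramTopEigenvalue (a b c : ℝ) : ℝ :=
  1 / 2 + √((a - b) ^ 2 + 4 * c ^ 2) / (2 * (a + b))

lemma gramTopEigenvalue_mul_one_sub {a b : ℝ} (c : ℝ) (hab : a + b ≠ 0) :
    gramTopEigenvalue a b c * (1 - gramTopEigenvalue a b c) = (a * b - c ^ 2) / (a + b) ^ 2 := by
  have hsq : √((a - b) ^ 2 + 4 * c ^ 2) ^ 2 = (a - b) ^ 2 + 4 * c ^ 2 :=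
    Real.sq_sqrt (by positivity)
  unfold gramTopEigenvalue
  field_simp
  linear_combination -hsq

lemma one_half_le_gramTopEigenvalue {a b : ℝ} (c : ℝ) (hab : 0 < a + b) :
    1 / 2 ≤ gramTopEigenvalue a b c :=
  le_add_of_nonneg_right (by positivity)

lemma gramTopEigenvalue_le_one {a b c : ℝ} (hc : c ^ 2 ≤ a * b)
    (hab : 0 < a + b) : gramTopEigenvalue a b c ≤ 1 := by
  have : √((a - b) ^ 2 + 4 * c ^ 2) ≤ a + b :=
    Real.sqrt_le_iff.mpr ⟨hab.le, by nlinarith⟩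
  have : √((a - b) ^ 2 + 4 * c ^ 2) / (2 * (a + b)) ≤ 1 / 2 := by
    rw [div_le_iff₀ (by positivity)]
    linarith
  unfold gramTopEigenvalue
  linarith

lemma gramTopEigenvalue_mono {a b c c' : ℝ} (hab : 0 < a + b) (hc : c ^ 2 ≤ c' ^ 2) :
    gramTopEigenvalue a b c ≤ gramTopEigenvalue a b c' := by
  unfold gramTopEigenvalue
  gcongr 1 / 2 + √(_ + 4 * ?_) / _

lemma binEnt_gramTopEigenvalue_zero {a b : ℝ} (hab : 0 < a + b) :
    binEnt (gramTopEigenvalue a b 0) = binEnt (a / (a + b)) := by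
  unfold gramTopEigenvalue
  rw [zero_pow two_ne_zero, mul_zero, add_zero, Real.sqrt_sq_eq_abs]
  rcases le_total b a with h | h
  · rw [abs_of_nonneg (sub_nonneg.mpr h)]
    congr 1
    field_simp
    ring
  · rw [abs_of_nonpos (sub_nonpos.mpr h), ← binEnt_one_sub (a / (a + b))]
    congr 1
    field_simp
    ring

lemma sum_apply_eq_add_of_power_sums {ι : Type*} [Fintype ι] (f : ℝ → ℝ) (hf : f 0 = 0)
    {p q : ℝ} (hp : p ≠ 0) (t : ι → ℝ) (ht : ∀ i, t i = 0 ∨ t i = p ∨ t i = q)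
    (hsum : ∑ i, t i = p + q) (hsum_sq : ∑ i, t i ^ 2 = p ^ 2 + q ^ 2) :
    ∑ i, f (t i) = f p + f q := by
  -- `f` agrees on `{0, p, q}` with the polynomial `α z + β z (z - p)`.
  set α := f p / p
  set β := (f q - α * q) / (q * (q - p)) with hβ
  have hfp : f p = α * p := (div_mul_cancel₀ _ hp).symm
  have hfq : f q = α * q + β * (q * (q - p)) := by
    by_cases hq : q * (q - p) = 0
    · rcases mul_eq_zero.mp hq with hq | hq
      · simp [hq, hf]
      · simp [sub_eq_zero.mp hq, hfp]
    · rw [hβ, div_mul_cancel₀ _ hq]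
      ring
  have hinterp : ∀ i, f (t i) = α * t i + β * (t i ^ 2 - p * t i) := by
    intro i
    rcases ht i with h | h | h <;> rw [h]
    · simp [hf]
    · rw [hfp]; ring
    · rw [hfq]; ring
  simp only [hinterp, Finset.sum_add_distrib, ← Finset.mul_sum, Finset.sum_sub_distrib, hsum,
    hsum_sq]
  rw [hfp, hfq]
  ring

namespace Matrix.IsHermitian

variable {n : Type*} [Fintype n] [DecidableEq n] {A : Matrix n n ℂ} (hA : A.IsHermitian)

open Polynomial in
lemma eval_eigenvalues_eq_zero {p : ℝ[X]} (hp : aeval A p = 0) (i : n) :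
    p.eval (hA.eigenvalues i) = 0 := by
  have : Nonempty n := ⟨i⟩
  have := spectrum.subset_polynomial_aeval A p ⟨_, hA.eigenvalues_mem_spectrum_real i, rfl⟩
  rwa [hp, spectrum.zero_eq, Set.mem_singleton_iff] at this

lemma trace_pow_eq_sum_eigenvalues_pow (k : ℕ) :
    (A ^ k).trace = ∑ i, ((hA.eigenvalues i ^ k : ℝ) : ℂ) := by
  conv_lhs => rw [hA.spectral_theorem, ← map_pow, Unitary.conjStarAlgAut_apply, trace_mul_cycle,
    Unitary.coe_star_mul_self, one_mul, diagonal_pow, trace_diagonal]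
  simp

open Polynomial in
lemma vonNeumannEntropy_eq_binEnt {μ : ℝ} (hμ : μ ≠ 0)
    (hcube : A ^ 3 = A ^ 2 - (μ * (1 - μ)) • A) (htr : A.trace = 1)
    (htr_sq : (A ^ 2).trace = ((μ ^ 2 + (1 - μ) ^ 2 : ℝ) : ℂ)) :
    vonNeumannEntropy hA = binEnt μ := by
  have hroots : ∀ i, hA.eigenvalues i = 0 ∨ hA.eigenvalues i = μ ∨ hA.eigenvalues i = 1 - μ := by
    intro i
    have hp : aeval A (X ^ 3 - X ^ 2 + (μ * (1 - μ)) • X : ℝ[X]) = 0 := by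
      simp only [map_add, map_sub, map_smul, map_pow, aeval_X, hcube]
      abel
    have := hA.eval_eigenvalues_eq_zero hp i
    simp only [eval_add, eval_sub, eval_smul, eval_pow, eval_X, smul_eq_mul] at this
    have hfactor :
        hA.eigenvalues i * ((hA.eigenvalues i - μ) * (hA.eigenvalues i - (1 - μ))) = 0 := by
      linear_combination this
    simpa [sub_eq_zero] using hfactor
  have hsum : ∑ i, hA.eigenvalues i = μ + (1 - μ) := by
    have h : ((∑ i, hA.eigenvalues i : ℝ) : ℂ) = 1 := by
      rw [← htr, hA.trace_eq_sum_eigenvalues]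
      push_cast
      rfl
    rw [add_sub_cancel]
    exact_mod_cast h
  have hsum_sq : ∑ i, hA.eigenvalues i ^ 2 = μ ^ 2 + (1 - μ) ^ 2 := by
    have := hA.trace_pow_eq_sum_eigenvalues_pow 2
    rw [htr_sq] at this
    exact_mod_cast this.symm
  rw [vonNeumannEntropy, ← Finset.sum_neg_distrib, binEnt,
    sum_apply_eq_add_of_power_sums (fun z ↦ -(z * Real.logb 2 z)) (by simp) hμ _ hroots hsum
      hsum_sq]
  ring

lemma vonNeumannEntropy_eq_binEnt_of_inv_smul {G : Matrix n n ℂ} {N d μ : ℝ} (hN : N ≠ 0)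
    (hA_eq : A = (N : ℂ)⁻¹ • G) (hG3 : G ^ 3 = (N : ℂ) • G ^ 2 - (d : ℂ) • G)
    (hGtr : G.trace = N) (hGtr_sq : (G ^ 2).trace = ((N ^ 2 - 2 * d : ℝ) : ℂ))
    (hμ0 : μ ≠ 0) (hμ : μ * (1 - μ) = d / N ^ 2) :
    vonNeumannEntropy hA = binEnt μ := by
  have hN' : (N : ℂ) ≠ 0 := by exact_mod_cast hN
  refine hA.vonNeumannEntropy_eq_binEnt hμ0 ?_ ?_ ?_
  · rw [hA_eq, smul_pow, smul_pow, hG3, hμ, ← Complex.coe_smul]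
    match_scalars <;> field_simp
  · rw [hA_eq, trace_smul, hGtr, smul_eq_mul, inv_mul_cancel₀ hN']
  · rw [hA_eq, smul_pow, trace_smul, hGtr_sq, smul_eq_mul,
      show μ ^ 2 + (1 - μ) ^ 2 = 1 - 2 * (μ * (1 - μ)) by ring, hμ]
    push_cast
    field_simp

end Matrix.IsHermitian

section TwoVectors

variable {R : Type*} [CommRing R] {n : Type*} [Fintype n] [DecidableEq n] (x x' y y' : n → R)

lemma vecMulVec_add_vecMulVec_sq :
    (vecMulVec x x' + vecMulVec y y') ^ 2 =
      (x' ⬝ᵥ x) • vecMulVec x x' + (x' ⬝ᵥ y) • vecMulVec x y' +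
        (y' ⬝ᵥ x) • vecMulVec y x' + (y' ⬝ᵥ y) • vecMulVec y y' := by
  simp only [sq, add_mul, mul_add, vecMulVec_mul_vecMulVec, vecMulVec_smul]
  abel

/-- Cayley–Hamilton for the Gram matrix `!![x' ⬝ᵥ x, x' ⬝ᵥ y; y' ⬝ᵥ x, y' ⬝ᵥ y]`. -/
lemma vecMulVec_add_vecMulVec_pow_three :
    (vecMulVec x x' + vecMulVec y y') ^ 3 =
      (x' ⬝ᵥ x + y' ⬝ᵥ y) • (vecMulVec x x' + vecMulVec y y') ^ 2 -
        ((x' ⬝ᵥ x) * (y' ⬝ᵥ y) - (x' ⬝ᵥ y) * (y' ⬝ᵥ x)) • (vecMulVec x x' + vecMulVec y y') := by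
  rw [pow_succ, vecMulVec_add_vecMulVec_sq]
  simp only [add_mul, mul_add, smul_mul_assoc, vecMulVec_mul_vecMulVec, vecMulVec_smul, smul_smul]
  module

lemma trace_vecMulVec_add_vecMulVec_sq :
    ((vecMulVec x x' + vecMulVec y y') ^ 2).trace =
      (x' ⬝ᵥ x) ^ 2 + (y' ⬝ᵥ y) ^ 2 + 2 * ((x' ⬝ᵥ y) * (y' ⬝ᵥ x)) := by
  simp only [vecMulVec_add_vecMulVec_sq, trace_add, trace_smul, trace_vecMulVec, smul_eq_mul,
    dotProduct_comm x x', dotProduct_comm y y', dotProduct_comm x y', dotProduct_comm y x']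
  ring

end TwoVectors

lemma EuclideanSpace.star_dotProduct_eq_inner {𝕜 : Type*} [RCLike 𝕜] {n : Type*} [Fintype n]
    (x y : EuclideanSpace 𝕜 n) : star x.ofLp ⬝ᵥ y.ofLp = inner 𝕜 x y := by
  rw [EuclideanSpace.inner_eq_star_dotProduct, dotProduct_comm]

lemma vonNeumannEntropy_normalized_vecMulVec_add_vecMulVec {n : Type*} [Fintype n] [DecidableEq n]
    (x y : EuclideanSpace ℂ n) (hxy : 0 < ‖x‖ ^ 2 + ‖y‖ ^ 2) {A : Matrix n n ℂ}
    (hA : A.IsHermitian) (hA_eq : A = ((‖x‖ ^ 2 + ‖y‖ ^ 2 : ℝ) : ℂ)⁻¹ •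
      (vecMulVec x.ofLp (star x.ofLp) + vecMulVec y.ofLp (star y.ofLp))) :
    vonNeumannEntropy hA = binEnt (gramTopEigenvalue (‖x‖ ^ 2) (‖y‖ ^ 2) ‖⟪x, y⟫‖) := by
  set N := ‖x‖ ^ 2 + ‖y‖ ^ 2
  set d := ‖x‖ ^ 2 * ‖y‖ ^ 2 - ‖⟪x, y⟫‖ ^ 2
  set G := vecMulVec x.ofLp (star x.ofLp) + vecMulVec y.ofLp (star y.ofLp)
  have hinner : ⟪x, y⟫ * ⟪y, x⟫ = ((‖⟪x, y⟫‖ ^ 2 : ℝ) : ℂ) := by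
    rw [← inner_conj_symm y x, RCLike.mul_conj]
    push_cast
    rfl
  have hG3 : G ^ 3 = (N : ℂ) • G ^ 2 - (d : ℂ) • G := by
    rw [vecMulVec_add_vecMulVec_pow_three]
    simp only [EuclideanSpace.star_dotProduct_eq_inner, inner_self_eq_norm_sq_to_K, hinner,
      RCLike.ofReal_eq_complex_ofReal, N, d, G]
    push_cast
    rfl
  have hGtr : G.trace = N := by
    simp only [G, N, trace_add, trace_vecMulVec, ← EuclideanSpace.inner_eq_star_dotProduct,
      inner_self_eq_norm_sq_to_K, RCLike.ofReal_eq_complex_ofReal]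
    push_cast
    rfl
  have hGtr_sq : (G ^ 2).trace = ((N ^ 2 - 2 * d : ℝ) : ℂ) := by
    rw [trace_vecMulVec_add_vecMulVec_sq]
    simp only [EuclideanSpace.star_dotProduct_eq_inner, inner_self_eq_norm_sq_to_K, hinner,
      RCLike.ofReal_eq_complex_ofReal, N, d]
    push_cast
    ring
  exact hA.vonNeumannEntropy_eq_binEnt_of_inv_smul hxy.ne' hA_eq hG3 hGtr hGtr_sq
    (one_half_pos.trans_le (one_half_le_gramTopEigenvalue _ hxy)).ne'
    (gramTopEigenvalue_mul_one_sub _ hxy.ne')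

namespace EuclideanSpace

variable {𝕜 : Type*} [RCLike 𝕜] {ι κ : Type*} [Fintype ι] [Fintype κ]

def tprod (u : EuclideanSpace 𝕜 ι) (v : EuclideanSpace 𝕜 κ) : EuclideanSpace 𝕜 (ι × κ) :=
  WithLp.toLp 2 fun z ↦ u z.1 * v z.2

lemma inner_tprod (u u' : EuclideanSpace 𝕜 ι) (v v' : EuclideanSpace 𝕜 κ) :
    inner 𝕜 (tprod u v) (tprod u' v') = inner 𝕜 u u' * inner 𝕜 v v' := by
  simp only [tprod, PiLp.inner_apply, RCLike.inner_apply, Fintype.sum_prod_type,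
    Finset.sum_mul_sum, map_mul]
  exact Finset.sum_congr rfl fun _ _ ↦ Finset.sum_congr rfl fun _ _ ↦ by ring

lemma norm_tprod (u : EuclideanSpace 𝕜 ι) (v : EuclideanSpace 𝕜 κ) :
    ‖tprod u v‖ = ‖u‖ * ‖v‖ := by
  have h := inner_tprod u u v v
  simp only [inner_self_eq_norm_sq_to_K, ← mul_pow] at h
  exact (pow_left_inj₀ (norm_nonneg _) (by positivity) two_ne_zero).mp (by exact_mod_cast h)

end EuclideanSpace

/-- for ρ_{AE} = (1/N)(|0⟩⟨0|⊗|g⁰⟩⟨g⁰| + |1⟩⟨1|⊗|g¹⟩⟨g¹|),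
S(A|E) ≥ h(N⁰/(N⁰+N¹)) − h(λ). -/
theorem cond_entropy_two_vector_bound {m : ℕ}
    (g0 g1 : EuclideanSpace ℂ (Fin m))
    (N0 N1 N : ℝ)
    (hN0 : N0 = ‖g0‖^2) (hN1 : N1 = ‖g1‖^2)
    (hN0pos : 0 < N0) (hN1pos : 0 < N1) (hN : N = N0 + N1)
    (ρAE : Matrix (Fin 2 × Fin m) (Fin 2 × Fin m) ℂ)
    (hρAEdef : ∀ a i b j, ρAE (a, i) (b, j) =
      if a = 0 ∧ b = 0 then (N : ℂ)⁻¹ * (g0 i * starRingEnd ℂ (g0 j))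
      else if a = 1 ∧ b = 1 then (N : ℂ)⁻¹ * (g1 i * starRingEnd ℂ (g1 j))
      else 0)
    (ρE : Matrix (Fin m) (Fin m) ℂ)
    (hρEdef : ∀ i j, ρE i j =
      (N : ℂ)⁻¹ * (g0 i * starRingEnd ℂ (g0 j) + g1 i * starRingEnd ℂ (g1 j)))
    (hAE : ρAE.IsHermitian) (hE : ρE.IsHermitian) :
    vonNeumannEntropy hAE - vonNeumannEntropy hE ≥
      binEnt (N0 / (N0 + N1)) -
        binEnt (1/2 + Real.sqrt ((N0 - N1)^2 + 4 * (⟪g0, g1⟫.re)^2)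
          / (2*(N0+N1))) := by
  subst hN0 hN1 hN
  have hpos : 0 < ‖g0‖ ^ 2 + ‖g1‖ ^ 2 := add_pos hN0pos hN1pos
  set u0 := (EuclideanSpace.single (0 : Fin 2) (1 : ℂ)).tprod g0
  set u1 := (EuclideanSpace.single (1 : Fin 2) (1 : ℂ)).tprod g1
  have hu0 : ‖u0‖ = ‖g0‖ := by simp [u0, EuclideanSpace.norm_tprod]
  have hu1 : ‖u1‖ = ‖g1‖ := by simp [u1, EuclideanSpace.norm_tprod]
  have hu01 : ⟪u0, u1⟫ = 0 := by
    simp [u0, u1, EuclideanSpace.inner_tprod, EuclideanSpace.inner_single_left]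
  have hSAE := vonNeumannEntropy_normalized_vecMulVec_add_vecMulVec u0 u1 (by rwa [hu0, hu1])
    hAE (by
      rw [hu0, hu1]
      ext ⟨a, i⟩ ⟨b, j⟩
      fin_cases a <;> fin_cases b <;>
        simp [hρAEdef, u0, u1, EuclideanSpace.tprod, vecMulVec_apply])
  rw [hu0, hu1, hu01, norm_zero, binEnt_gramTopEigenvalue_zero hpos] at hSAE
  have hSE := vonNeumannEntropy_normalized_vecMulVec_add_vecMulVec g0 g1 hpos hE (by
    ext i j
    simp [hρEdef, vecMulVec_apply, mul_add])
  have hCS : ‖⟪g0, g1⟫‖ ^ 2 ≤ ‖g0‖ ^ 2 * ‖g1‖ ^ 2 := by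
    rw [← mul_pow]
    exact pow_le_pow_left₀ (norm_nonneg _) (norm_inner_le_norm g0 g1) 2
  have hre : ⟪g0, g1⟫.re ^ 2 ≤ ‖⟪g0, g1⟫‖ ^ 2 :=
    sq_le_sq.mpr ((Complex.abs_re_le_norm _).trans_eq (abs_norm _).symm)
  have hmono := binEnt_antitoneOn
    ⟨one_half_le_gramTopEigenvalue _ hpos, gramTopEigenvalue_le_one (hre.trans hCS) hpos⟩
    ⟨one_half_le_gramTopEigenvalue _ hpos, gramTopEigenvalue_le_one hCS hpos⟩
    (gramTopEigenvalue_mono hpos hre)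
  rw [hSAE, hSE]
  exact sub_le_sub_left hmono _
end

section
/- In the depolarizing-channel setting with parameter Q and α ∈ (0,1), if additionally p_{a,ā} = Q, then Re⟨e₀|e₃⟩ = 1 − 2Q − Re⟨e₁|e₂⟩, independent of α; combined with the Cauchy–Schwarz bound |Re⟨e₁|e₂⟩| ≤ Q, this gives Re⟨e₀|e₃⟩ ∈ [1−3Q, 1−Q]. -/
open scoped ComplexInnerProductSpace

/-- The embedding x ↦ |0⟩⊗x of the ancilla into qubit ⊗ ancilla (modeled as E × E
with the L² inner product, first component = |0⟩ slot, second = |1⟩ slot). -/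
noncomputable def emb0 {E : Type*} [NormedAddCommGroup E] [InnerProductSpace ℂ E]
    (x : E) : WithLp 2 (E × E) := (WithLp.equiv 2 (E × E)).symm (x, 0)

/-- The embedding x ↦ |1⟩⊗x of the ancilla into qubit ⊗ ancilla. -/
noncomputable def emb1 {E : Type*} [NormedAddCommGroup E] [InnerProductSpace ℂ E]
    (x : E) : WithLp 2 (E × E) := (WithLp.equiv 2 (E × E)).symm (0, x)

/-!
The vector whose squared norm is `p_{a,ā}` splits as `αᾱ (e₀ - e₃) + (ᾱ² e₂ - α² e₁)`, and the
vanishing cross terms make the two parts orthogonal. Writing `s = α²`, `t = ᾱ² = 1 - s`, the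
equation `p_{a,ā} = Q` becomes `2st (1 - 2Q - Re⟨e₀|e₃⟩ - Re⟨e₁|e₂⟩) = 0` because
`s² + t² = 1 - 2st`; since `st ≠ 0` the identity follows. The interval comes from
`|Re⟨e₁|e₂⟩| ≤ (‖e₁‖² + ‖e₂‖²) / 2 = Q`.
-/

section

variable {𝕜 E : Type*} [RCLike 𝕜] [SeminormedAddCommGroup E] [InnerProductSpace 𝕜 E]

open RCLike

theorem abs_re_inner_le_half_add_norm_sq (x y : E) :
    |re (inner 𝕜 x y)| ≤ (‖x‖ ^ 2 + ‖y‖ ^ 2) / 2 :=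
  abs_le.2 ⟨by linarith [norm_add_sq (𝕜 := 𝕜) x y, sq_nonneg ‖x + y‖],
    by linarith [norm_sub_sq (𝕜 := 𝕜) x y, sq_nonneg ‖x - y‖]⟩

theorem norm_ofReal_smul_sub_ofReal_smul_sq (a b : ℝ) (x y : E) :
    ‖(a : 𝕜) • x - (b : 𝕜) • y‖ ^ 2
      = a ^ 2 * ‖x‖ ^ 2 - 2 * a * b * re (inner 𝕜 x y) + b ^ 2 * ‖y‖ ^ 2 := by
  rw [norm_sub_sq (𝕜 := 𝕜), inner_smul_real_left, inner_smul_real_right, smul_re, smul_re,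
    norm_smul, norm_smul, norm_ofReal, norm_ofReal, mul_pow, mul_pow, sq_abs, sq_abs]
  ring

theorem norm_ofReal_smul_combination_sq (a b c d : ℝ) (x₀ x₁ x₂ x₃ : E)
    (h₀₁ : re (inner 𝕜 x₀ x₁) = 0) (h₀₂ : re (inner 𝕜 x₀ x₂) = 0)
    (h₂₃ : re (inner 𝕜 x₂ x₃) = 0) (h₁₃ : re (inner 𝕜 x₁ x₃) = 0) :
    ‖(a : 𝕜) • x₀ + (b : 𝕜) • x₂ - (c : 𝕜) • x₁ - (d : 𝕜) • x₃‖ ^ 2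
      = a ^ 2 * ‖x₀‖ ^ 2 + d ^ 2 * ‖x₃‖ ^ 2 + b ^ 2 * ‖x₂‖ ^ 2 + c ^ 2 * ‖x₁‖ ^ 2
        - 2 * a * d * re (inner 𝕜 x₀ x₃) - 2 * b * c * re (inner 𝕜 x₁ x₂) := by
  have hsplit : (a : 𝕜) • x₀ + (b : 𝕜) • x₂ - (c : 𝕜) • x₁ - (d : 𝕜) • x₃
      = ((a : 𝕜) • x₀ - (d : 𝕜) • x₃) + ((b : 𝕜) • x₂ - (c : 𝕜) • x₁) := by abel
  have horth : re (inner 𝕜 ((a : 𝕜) • x₀ - (d : 𝕜) • x₃) ((b : 𝕜) • x₂ - (c : 𝕜) • x₁)) = 0 := by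
    simp only [inner_sub_left, inner_sub_right, inner_smul_real_left, inner_smul_real_right,
      map_sub, smul_re, h₀₁, h₀₂]
    rw [inner_re_symm x₃ x₂, inner_re_symm x₃ x₁, h₂₃, h₁₃]
    simp
  rw [hsplit, norm_add_sq (𝕜 := 𝕜), horth, norm_ofReal_smul_sub_ofReal_smul_sq,
    norm_ofReal_smul_sub_ofReal_smul_sq, inner_re_symm x₂ x₁]
  ring

end

theorem depolarizing_re03_bound_general {E : Type*} [NormedAddCommGroup E]
    [InnerProductSpace ℂ E]
    (e0 e1 e2 e3 f1 : E)
    (Q α αb : ℝ) (hα0 : 0 < α) (hα1 : α < 1) (hαb : αb = Real.sqrt (1 - α^2))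
    (h00 : ⟪e0, e0⟫.re = 1 - Q) (h33 : ⟪e3, e3⟫.re = 1 - Q)
    (h11 : ⟪e1, e1⟫.re = Q) (h22 : ⟪e2, e2⟫.re = Q)
    (h01 : ⟪e0, e1⟫.re = 0) (h02 : ⟪e0, e2⟫.re = 0)
    (h23 : ⟪e2, e3⟫.re = 0) (h13 : ⟪e1, e3⟫.re = 0)
    (hf1 : f1 = ((αb:ℂ)*(α:ℂ)) • e0 + (αb:ℂ)^2 • e2
        - (α:ℂ)^2 • e1 - ((α:ℂ)*(αb:ℂ)) • e3)
    (hpaa : ‖f1‖^2 = Q) :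
    ⟪e0, e3⟫.re = 1 - 2*Q - ⟪e1, e2⟫.re ∧
    1 - 3*Q ≤ ⟪e0, e3⟫.re ∧ ⟪e0, e3⟫.re ≤ 1 - Q := by
  have hαb2 : αb ^ 2 = 1 - α ^ 2 := by rw [hαb, Real.sq_sqrt]; nlinarith
  have hαb0 : 0 < αb := by rw [hαb]; exact Real.sqrt_pos.2 (by nlinarith)
  have hn0 : ‖e0‖ ^ 2 = 1 - Q := (inner_self_eq_norm_sq (𝕜 := ℂ) e0).symm.trans h00
  have hn3 : ‖e3‖ ^ 2 = 1 - Q := (inner_self_eq_norm_sq (𝕜 := ℂ) e3).symm.trans h33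
  have hn1 : ‖e1‖ ^ 2 = Q := (inner_self_eq_norm_sq (𝕜 := ℂ) e1).symm.trans h11
  have hn2 : ‖e2‖ ^ 2 = Q := (inner_self_eq_norm_sq (𝕜 := ℂ) e2).symm.trans h22
  have hexp := norm_ofReal_smul_combination_sq (𝕜 := ℂ) (αb * α) (αb ^ 2) (α ^ 2) (α * αb)
    e0 e1 e2 e3 h01 h02 h23 h13
  push_cast [RCLike.ofReal_eq_complex_ofReal, RCLike.re_to_complex] at hexp
  rw [hf1, hexp, hn0, hn1, hn2, hn3] at hpaa
  have key : ⟪e0, e3⟫.re = 1 - 2 * Q - ⟪e1, e2⟫.re := by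
    refine mul_left_cancel₀ (by positivity : αb ^ 2 * α ^ 2 ≠ 0) ?_
    linear_combination (-1 / 2 : ℝ) * hpaa + (Q / 2) * (αb ^ 2 + α ^ 2 + 1) * hαb2
  have hcs := abs_le.1 (abs_re_inner_le_half_add_norm_sq (𝕜 := ℂ) e1 e2)
  rw [RCLike.re_to_complex, hn1, hn2] at hcs
  exact ⟨key, by linarith [hcs.2], by linarith [hcs.1]⟩

/-- in the depolarizing setting with parameter Q and α ∈ (0,1),
if p_{a,ā} = Q then Re⟨e₀|e₃⟩ = 1 − 2Q − Re⟨e₁|e₂⟩ (independent of α), and by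
Cauchy–Schwarz Re⟨e₀|e₃⟩ ∈ [1−3Q, 1−Q]. -/
theorem depolarizing_re03_bound {E : Type*} [NormedAddCommGroup E]
    [InnerProductSpace ℂ E] [FiniteDimensional ℂ E]
    (e0 e1 e2 e3 f1 : E)
    (Q α αb : ℝ) (hα0 : 0 < α) (hα1 : α < 1) (hαb : αb = Real.sqrt (1 - α^2))
    (h00 : ⟪e0, e0⟫.re = 1 - Q) (h33 : ⟪e3, e3⟫.re = 1 - Q)
    (h11 : ⟪e1, e1⟫.re = Q) (h22 : ⟪e2, e2⟫.re = Q)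
    (h01 : ⟪e0, e1⟫.re = 0) (h02 : ⟪e0, e2⟫.re = 0)
    (h23 : ⟪e2, e3⟫.re = 0) (h13 : ⟪e1, e3⟫.re = 0)
    (hf1 : f1 = ((αb:ℂ)*(α:ℂ)) • e0 + (αb:ℂ)^2 • e2
        - (α:ℂ)^2 • e1 - ((α:ℂ)*(αb:ℂ)) • e3)
    (hpaa : ‖f1‖^2 = Q) :
    ⟪e0, e3⟫.re = 1 - 2*Q - ⟪e1, e2⟫.re ∧
    1 - 3*Q ≤ ⟪e0, e3⟫.re ∧ ⟪e0, e3⟫.re ≤ 1 - Q :=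
  depolarizing_re03_bound_general e0 e1 e2 e3 f1 Q α αb hα0 hα1 hαb h00 h33 h11 h22 h01 h02 h23 h13
    hf1 hpaa
end
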